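/- Cumulative bound on the scale parameter: under the NormalHedge dynamics, for every constant 0 < δ ≤ 1/2 and every round t ≥ 1, c_t ≤ (3/2)(1 + 49.19 δ)·t + (8 ln³ N)/δ + (81 ln² N)/δ³. -/

import Mathlib

/-!
The scale `c_t` is the value at which the potential `∑ᵢ exp ((R_{i,t}⁺)² / (2c))` equals `N e`.
Every regret then satisfies `(R⁺)² ≤ 2 c_t (1 + ln N)`, some regret has `(R⁺)² ≥ 2 c_t`, and
regrets move by at most `1` per round.

Below the threshold `12 (1 + ln N) / δ³` these facts alone give `c_{t+1} ≤ 81 ln² N / δ³`.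
Above it, write `u = (R⁺)² / (2 c_t)`. A second-order Taylor expansion of the potential, whose
first-order term vanishes because the learner plays proportionally to its gradient, shows that
at the old scale the potential grows by about `(3 / (2 c_t)) ∑ u eᵘ`. Enlarging the scale by
`Δ = (3/2)(1 + 49.19 δ)` lowers it by about `(Δ / c_t) ∑ u eᵘ`, so `c_{t+1} ≤ c_t + Δ`, and
induction on `t` gives the bound.
-/

open Real Finset Filter

/-- The NormalHedge dynamics with `N` actions.  Rounds are indexed by `t = 1, 2, …`;
`loss i t` is the loss of action `i` in round `t`, `p i t` its weight in round `t`,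
`R i t` its cumulative regret after `t` rounds, and `c t` the scale parameter. -/
structure NormalHedge (N : ℕ) where
  hN : 2 ≤ N
  loss : Fin N → ℕ → ℝ
  p : Fin N → ℕ → ℝ
  R : Fin N → ℕ → ℝ
  c : ℕ → ℝ
  loss_mem : ∀ i t, 1 ≤ t → loss i t ∈ Set.Icc (0 : ℝ) 1
  p_one : ∀ i, p i 1 = 1 / N
  R_zero : ∀ i, R i 0 = 0
  R_rec : ∀ i t, R i (t + 1) = R i t + ((∑ j, p j (t + 1) * loss j (t + 1)) - loss i (t + 1))
  c_pos : ∀ t, 1 ≤ t → 0 < c t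
  c_eq : ∀ t, 1 ≤ t →
    (1 / N : ℝ) * ∑ i, Real.exp (max (R i t) 0 ^ 2 / (2 * c t)) = Real.exp 1
  p_rec : ∀ i t, 1 ≤ t →
    p i (t + 1) = (max (R i t) 0 / c t) * Real.exp (max (R i t) 0 ^ 2 / (2 * c t)) /
      ∑ j, (max (R j t) 0 / c t) * Real.exp (max (R j t) 0 ^ 2 / (2 * c t))

namespace Real

theorem exp_le_one_add_add_sq_div_two_of_nonpos {z : ℝ} (hz : z ≤ 0) :
    exp z ≤ 1 + z + z ^ 2 / 2 := by
  have hderiv (x : ℝ) : HasDerivAt (fun z ↦ 1 + z + z ^ 2 / 2 - exp z) (1 + x - exp x) x := by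
    refine ((((hasDerivAt_id x).const_add 1).add ((hasDerivAt_pow 2 x).div_const 2)).sub
      (hasDerivAt_exp x)).congr_deriv ?_
    simp
  have hanti : Antitone (fun z ↦ 1 + z + z ^ 2 / 2 - exp z) :=
    antitone_of_deriv_nonpos (fun x ↦ (hderiv x).differentiableAt) fun x ↦ by
      rw [(hderiv x).deriv]; linarith [add_one_le_exp x]
  simpa using hanti hz

theorem exp_le_one_add_add_sq_div_two_mul_exp_of_nonneg {z : ℝ} (hz : 0 ≤ z) :
    exp z ≤ 1 + z + z ^ 2 / 2 * exp z := by
  -- equivalently `1 ≤ (1 + z) e^{-z} + z²/2`, whose right side is monotone on `[0, ∞)`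
  have hderiv (x : ℝ) : HasDerivAt (fun z ↦ z ^ 2 / 2 + (1 + z) * exp (-z))
      (x - x * exp (-x)) x := by
    have hexp : HasDerivAt (fun z ↦ exp (-z)) (-exp (-x)) x := by
      simpa using (hasDerivAt_neg x).exp
    refine (((hasDerivAt_pow 2 x).div_const 2).add
      (((hasDerivAt_id x).const_add 1).mul hexp)).congr_deriv ?_
    simp; ring
  have hmono : MonotoneOn (fun z ↦ z ^ 2 / 2 + (1 + z) * exp (-z)) (Set.Ici 0) := by
    refine monotoneOn_of_deriv_nonneg (convex_Ici 0)
      (fun x _ ↦ (hderiv x).continuousAt.continuousWithinAt)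
      (fun x _ ↦ (hderiv x).differentiableAt.differentiableWithinAt) fun x hx ↦ ?_
    rw [interior_Ici, Set.mem_Ioi] at hx
    rw [(hderiv x).deriv]
    nlinarith [exp_le_one_iff.2 (neg_nonpos.2 hx.le)]
  have h := hmono Set.self_mem_Ici hz hz
  norm_num at h
  have hinv : exp (-z) * exp z = 1 := by rw [← exp_add]; simp
  nlinarith [exp_pos z]

theorem exp_le_one_add_add_sq_div_two_mul_exp_max (z : ℝ) :
    exp z ≤ 1 + z + z ^ 2 / 2 * exp (max z 0) := by
  rcases le_total z 0 with hz | hz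
  · simpa [max_eq_right hz] using exp_le_one_add_add_sq_div_two_of_nonpos hz
  · simpa [max_eq_left hz] using exp_le_one_add_add_sq_div_two_mul_exp_of_nonneg hz

theorem two_mul_exp_sub_exp_one_le_mul_exp (u : ℝ) : 2 * exp u - exp 1 ≤ u * exp u := by
  have h : (2 - u) * exp u ≤ exp (1 - u) * exp u :=
    mul_le_mul_of_nonneg_right (by linarith [add_one_le_exp (1 - u)]) (exp_pos u).le
  rw [← exp_add, sub_add_cancel] at h
  linarith

/-- The tangent line at `u` of the convex function `x ↦ x eˣ` lies below its graph. -/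
theorem mul_exp_sub_mul_exp_le {u : ℝ} (hu : 0 ≤ u) (s : ℝ) :
    u * exp u - s * exp s ≤ (u - s) * (1 + u) * exp u := by
  obtain ⟨d, rfl⟩ : ∃ d, s = u + d := ⟨s - u, by ring⟩
  have hd : 0 ≤ d * (exp d - 1) := by
    rcases le_total 0 d with h | h
    · exact mul_nonneg h (by linarith [one_le_exp h])
    · exact mul_nonneg_of_nonpos_of_nonpos h (by linarith [exp_le_one_iff.2 h])
  have h1 := add_one_le_exp d
  rw [exp_add]
  nlinarith [exp_pos u, mul_nonneg hu (sub_nonneg.2 h1), mul_nonneg (exp_pos u).le hd,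
    mul_nonneg (exp_pos u).le (mul_nonneg hu (sub_nonneg.2 h1))]

theorem exp_one_sub_mul_le {u q M : ℝ} (hu : 0 ≤ u) (huM : u ≤ M) (hq : 0 ≤ q) :
    exp ((1 - q) * u) ≤ exp u - q * (u * exp u) + q ^ 2 * M / 2 * (u * exp u) := by
  have h := exp_le_one_add_add_sq_div_two_of_nonpos (neg_nonpos.2 (mul_nonneg hq hu))
  have hsq : u ^ 2 * exp u ≤ M * (u * exp u) := by
    nlinarith [mul_le_mul_of_nonneg_right huM (mul_nonneg hu (exp_pos u).le)]
  rw [show (1 - q) * u = u + -(q * u) by ring, exp_add]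
  nlinarith [mul_le_mul_of_nonneg_left h (exp_pos u).le,
    mul_le_mul_of_nonneg_left hsq (sq_nonneg q)]

/-- Second-order Taylor bound for the potential `x ↦ exp (x² / (2c))` between `a = R⁺` and
`b = (R + r)⁺`, where `|r| ≤ 1`; the remainder is evaluated at `a + 1`. -/
theorem exp_sq_div_le_of_sq_le {a b r c ε : ℝ} (hc : 0 < c) (ha : 0 ≤ a)
    (hb : b ^ 2 ≤ a ^ 2 + 2 * a * r + 1) (hab : |b ^ 2 - a ^ 2| ≤ 2 * a + 1)
    (hε : (2 * a + 1) / (2 * c) ≤ ε) :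
    exp (b ^ 2 / (2 * c)) ≤ exp (a ^ 2 / (2 * c)) + a / c * exp (a ^ 2 / (2 * c)) * r +
      exp ε / (2 * c) * ((1 + 2 * ε) * exp (a ^ 2 / (2 * c)) +
        2 * (a ^ 2 / (2 * c) * exp (a ^ 2 / (2 * c)))) := by
  set u := a ^ 2 / (2 * c)
  set η := (2 * a + 1) / (2 * c)
  set z := (b ^ 2 - a ^ 2) / (2 * c)
  have hη : 0 ≤ η := by positivity
  have hz : z ≤ a / c * r + 1 / (2 * c) := by
    calc z ≤ (2 * a * r + 1) / (2 * c) := div_le_div_of_nonneg_right (by linarith) (by positivity)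
      _ = a / c * r + 1 / (2 * c) := by field_simp
  have hzη : |z| ≤ η := by
    rw [abs_div, abs_of_pos (by positivity : 0 < 2 * c)]
    exact div_le_div_of_nonneg_right hab (by positivity)
  have hz2 : z ^ 2 / 2 ≤ (u + η) / c := by
    have : z ^ 2 ≤ η ^ 2 := sq_le_sq' (abs_le.1 hzη).1 (abs_le.1 hzη).2
    calc z ^ 2 / 2 ≤ η ^ 2 / 2 := by gcongr
      _ ≤ (u + η) / c := by
        simp only [u, η]
        field_simp
        nlinarith
  have hexp_z : exp z ≤ 1 + z + z ^ 2 / 2 * exp ε := by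
    refine (exp_le_one_add_add_sq_div_two_mul_exp_max z).trans ?_
    gcongr
    exact max_le ((le_abs_self z).trans (hzη.trans hε)) (hη.trans hε)
  have hremainder : 1 / (2 * c) + z ^ 2 / 2 * exp ε ≤ exp ε / (2 * c) * (1 + 2 * ε + 2 * u) := by
    have h1 : 1 ≤ exp ε := one_le_exp (hη.trans hε)
    calc 1 / (2 * c) + z ^ 2 / 2 * exp ε ≤ exp ε / (2 * c) + (u + η) / c * exp ε := by
          gcongr
      _ = exp ε / (2 * c) * (1 + 2 * η + 2 * u) := by field_simp; ring
      _ ≤ exp ε / (2 * c) * (1 + 2 * ε + 2 * u) := by gcongr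
  calc exp (b ^ 2 / (2 * c)) = exp u * exp z := by rw [← exp_add]; congr 1; ring
    _ ≤ exp u * (1 + a / c * r + (1 / (2 * c) + z ^ 2 / 2 * exp ε)) := by
        gcongr; linarith
    _ ≤ exp u * (1 + a / c * r + exp ε / (2 * c) * (1 + 2 * ε + 2 * u)) := by gcongr
    _ = _ := by ring

end Real

theorem sq_max_add_le_of_abs_le_one (R : ℝ) {r : ℝ} (hr : |r| ≤ 1) :
    max (R + r) 0 ^ 2 ≤ max R 0 ^ 2 + 2 * max R 0 * r + 1 := by
  obtain ⟨hr1, hr2⟩ := abs_le.1 hr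
  rcases le_total 0 R with hR | hR <;> rcases le_total 0 (R + r) with hRr | hRr <;>
    simp only [max_eq_left, max_eq_right, hR, hRr] <;> nlinarith

theorem abs_sq_sub_sq_le {a b : ℝ} (ha : 0 ≤ a) (hb : 0 ≤ b) (hab : |b - a| ≤ 1) :
    |b ^ 2 - a ^ 2| ≤ 2 * a + 1 := by
  obtain ⟨h1, h2⟩ := abs_le.1 hab
  rw [abs_le]; constructor <;> nlinarith

section FiniteSums

variable {ι : Type*} [Fintype ι]

theorem two_mul_sum_exp_sub_le_sum_mul_exp (u : ι → ℝ) :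
    2 * ∑ i, exp (u i) - Fintype.card ι * exp 1 ≤ ∑ i, u i * exp (u i) := by
  have h := Finset.sum_le_sum fun i (_ : i ∈ univ) ↦ Real.two_mul_exp_sub_exp_one_le_mul_exp (u i)
  simpa [Finset.sum_sub_distrib, Finset.mul_sum] using h

theorem sum_mul_exp_sub_sum_mul_exp_le {u u' : ι → ℝ} {ε : ℝ} (hu : ∀ i, 0 ≤ u i)
    (hdrop : ∀ i, u i - u' i ≤ ε) :
    ∑ i, u i * exp (u i) - ∑ i, u' i * exp (u' i) ≤
      ε * (∑ i, exp (u i) + ∑ i, u i * exp (u i)) := by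
  rw [← Finset.sum_sub_distrib, ← Finset.sum_add_distrib, Finset.mul_sum]
  refine Finset.sum_le_sum fun i _ ↦ ?_
  have hpos : 0 ≤ (1 + u i) * exp (u i) := mul_nonneg (by linarith [hu i]) (exp_pos _).le
  calc u i * exp (u i) - u' i * exp (u' i) ≤ (u i - u' i) * ((1 + u i) * exp (u i)) := by
        linarith [Real.mul_exp_sub_mul_exp_le (hu i) (u' i)]
    _ ≤ ε * (exp (u i) + u i * exp (u i)) := by
        nlinarith [mul_le_mul_of_nonneg_right (hdrop i) hpos]

theorem sum_exp_one_sub_mul_le {u : ι → ℝ} {q M : ℝ} (hu : ∀ i, 0 ≤ u i) (hM : ∀ i, u i ≤ M)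
    (hq : 0 ≤ q) :
    ∑ i, exp ((1 - q) * u i) ≤
      ∑ i, exp (u i) - q * ∑ i, u i * exp (u i) + q ^ 2 * M / 2 * ∑ i, u i * exp (u i) := by
  rw [Finset.mul_sum, Finset.mul_sum, ← Finset.sum_sub_distrib, ← Finset.sum_add_distrib]
  exact Finset.sum_le_sum fun i _ ↦ Real.exp_one_sub_mul_le (hu i) (hM i) hq

/-- `u` and `u'` play the normalized squared regrets `(R⁺)² / (2c)` before and after a round, so
the conclusion says that the potential after the round is at most `N e` at the scale
`c / (1 - q)`. -/
theorem sum_exp_one_sub_mul_le_card_mul_exp_one {u u' : ι → ℝ} {ε κ q M : ℝ}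
    (hu : ∀ i, 0 ≤ u i) (hu' : ∀ i, 0 ≤ u' i) (hdrop : ∀ i, u i - u' i ≤ ε)
    (hM : ∀ i, u' i ≤ M) (hε : 0 ≤ ε) (hε1 : ε < 1) (hκ : 0 ≤ κ) (hq : 0 ≤ q)
    (hK : ∑ i, exp (u i) = Fintype.card ι * exp 1)
    (hV : ∑ i, exp (u' i) ≤ ∑ i, exp (u i) +
      κ * ((1 + 2 * ε) * ∑ i, exp (u i) + 2 * ∑ i, u i * exp (u i)))
    (hκq : κ * (1 + 2 * ε + 2 * ((1 + ε) / (1 - ε))) ≤ q - q ^ 2 * M / 2) :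
    ∑ i, exp ((1 - q) * u' i) ≤ Fintype.card ι * exp 1 := by
  set K := ∑ i, exp (u i)
  set V := ∑ i, exp (u' i)
  set S := ∑ i, u i * exp (u i)
  set S' := ∑ i, u' i * exp (u' i)
  rw [← hK]
  rcases le_or_gt V K with hVK | hKV
  · refine le_trans (Finset.sum_le_sum fun i _ ↦ ?_) hVK
    exact exp_le_exp.2 (by nlinarith [hu' i])
  have hKS' : K ≤ S' := by linarith [two_mul_sum_exp_sub_le_sum_mul_exp u']
  have hSS' : S ≤ (1 + ε) / (1 - ε) * S' := by
    rw [div_mul_eq_mul_div, le_div_iff₀ (by linarith)]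
    nlinarith [sum_mul_exp_sub_sum_mul_exp_le hu hdrop]
  have hgrowth : V - K ≤ (q - q ^ 2 * M / 2) * S' := by
    have hS'0 : 0 ≤ S' := Finset.sum_nonneg fun i _ ↦ mul_nonneg (hu' i) (exp_pos _).le
    calc V - K ≤ κ * ((1 + 2 * ε) * K + 2 * S) := by linarith
      _ ≤ κ * (1 + 2 * ε + 2 * ((1 + ε) / (1 - ε))) * S' := by
        rw [mul_assoc]; gcongr; nlinarith
      _ ≤ (q - q ^ 2 * M / 2) * S' := by gcongr
  linarith [sum_exp_one_sub_mul_le hu' hM hq]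

theorem sum_exp_sq_div_le {a b r : ι → ℝ} {c ε : ℝ} (hc : 0 < c) (ha : ∀ i, 0 ≤ a i)
    (hb : ∀ i, b i ^ 2 ≤ a i ^ 2 + 2 * a i * r i + 1) (hab : ∀ i, |b i ^ 2 - a i ^ 2| ≤ 2 * a i + 1)
    (hε : ∀ i, (2 * a i + 1) / (2 * c) ≤ ε)
    (hzero : ∑ i, a i / c * exp (a i ^ 2 / (2 * c)) * r i = 0) :
    ∑ i, exp (b i ^ 2 / (2 * c)) ≤ ∑ i, exp (a i ^ 2 / (2 * c)) +
      exp ε / (2 * c) * ((1 + 2 * ε) * ∑ i, exp (a i ^ 2 / (2 * c)) +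
        2 * ∑ i, a i ^ 2 / (2 * c) * exp (a i ^ 2 / (2 * c))) := by
  refine (Finset.sum_le_sum fun i _ ↦
    Real.exp_sq_div_le_of_sq_le hc (ha i) (hb i) (hab i) (hε i)).trans_eq ?_
  simp only [Finset.sum_add_distrib, hzero, ← Finset.mul_sum]
  ring

theorem sum_mul_sub_eq_zero_of_weighted_mean {w ℓ : ι → ℝ}
    (hw : ∑ j, w j ≠ 0) : ∑ i, w i * (∑ j, w j / (∑ k, w k) * ℓ j - ℓ i) = 0 := by
  simp only [mul_sub, Finset.sum_sub_distrib, ← Finset.sum_mul, div_mul_eq_mul_div,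
    ← Finset.sum_div]
  field_simp
  ring

end FiniteSums

theorem two_mul_add_one_div_le_of_sq_le {δ B c x : ℝ} (hδ0 : 0 < δ) (hδ1 : δ ≤ 1 / 2)
    (hB : 1.69 ≤ B) (hc : 12 * B / δ ^ 3 ≤ c) (hx : 0 ≤ x) (hxB : x ^ 2 ≤ 2 * c * B) :
    (2 * x + 1) / (2 * c) ≤ 0.3 * δ := by
  rw [div_le_iff₀ (by positivity)] at hc
  have hδ2 : δ ^ 2 ≤ 1 / 4 := by nlinarith
  have hc0 : 0 < c := by nlinarith [pow_pos hδ0 3]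
  have hδc : 1 ≤ 0.02 * δ * c := by nlinarith [pow_pos hδ0 3]
  have hxδc : x ≤ 0.29 * δ * c := by
    have : 2 * c * B ≤ (0.29 * δ * c) ^ 2 := by nlinarith [mul_pos hc0 hc0, mul_pos hδ0 hc0]
    nlinarith [mul_pos hδ0 hc0]
  rw [div_le_iff₀ (by positivity)]
  linarith

theorem scale_growth_le_of_threshold {δ B c : ℝ} (hδ0 : 0 < δ) (hδ1 : δ ≤ 1 / 2) (hB : 1.69 ≤ B)
    (hc : 12 * B / δ ^ 3 ≤ c) :
    3 / 2 * (1 + 49.19 * δ) ≤ 0.48 * δ * c ∧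
      3 / 2 * (1 + 49.19 * δ) * (B + 0.3 * δ) ≤ 0.88 * δ * c := by
  rw [div_le_iff₀ (by positivity)] at hc
  have hδ2 : δ ^ 2 ≤ 1 / 4 := by nlinarith
  have hΔδ : 3 / 2 * (1 + 49.19 * δ) * δ ^ 2 ≤ 9.6 := by
    have hδ3 : δ ^ 3 ≤ 1 / 8 := by nlinarith
    nlinarith
  constructor <;> refine le_of_mul_le_mul_right ?_ (pow_pos hδ0 2)
  · nlinarith
  · nlinarith [mul_le_mul_of_nonneg_right hΔδ (by linarith : 0 ≤ B + 0.3 * δ)]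

theorem scale_growth_numeric {δ B c : ℝ} (hδ0 : 0 < δ) (hδ1 : δ ≤ 1 / 2) (hB : 1.69 ≤ B)
    (hc : 12 * B / δ ^ 3 ≤ c) :
    exp (0.3 * δ) / (2 * c) * (1 + 2 * (0.3 * δ) + 2 * ((1 + 0.3 * δ) / (1 - 0.3 * δ))) ≤
      3 / 2 * (1 + 49.19 * δ) / (c + 3 / 2 * (1 + 49.19 * δ)) -
        (3 / 2 * (1 + 49.19 * δ) / (c + 3 / 2 * (1 + 49.19 * δ))) ^ 2 * (B + 0.3 * δ) / 2 := by
  obtain ⟨hΔc, hΔB⟩ := scale_growth_le_of_threshold hδ0 hδ1 hB hc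
  set Δ := 3 / 2 * (1 + 49.19 * δ) with hΔ
  have hc0 : 0 < c := lt_of_lt_of_le (by positivity) hc
  have hΔ0 : 0 < Δ := by positivity
  have hexp : exp (0.3 * δ) ≤ 1 + 0.36 * δ := by
    refine (exp_bound_div_one_sub_of_interval (by positivity) (by linarith)).trans ?_
    rw [div_le_iff₀ (by linarith)]
    nlinarith
  have hratio : (1 + 0.3 * δ) / (1 - 0.3 * δ) ≤ 1 + δ := by
    rw [div_le_iff₀ (by linarith)]
    nlinarith
  set q := Δ / (c + Δ)
  have hq : Δ / (c * (1 + 0.48 * δ)) ≤ q :=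
    div_le_div_of_nonneg_left hΔ0.le (by positivity) (by linarith)
  have hqB : q * (B + 0.3 * δ) ≤ 0.88 * δ := by
    rw [div_mul_eq_mul_div, div_le_iff₀ (by positivity)]
    nlinarith
  calc exp (0.3 * δ) / (2 * c) * (1 + 2 * (0.3 * δ) + 2 * ((1 + 0.3 * δ) / (1 - 0.3 * δ)))
      ≤ (1 + 0.36 * δ) / (2 * c) * (3 + 2.6 * δ) := by
        have : 0 ≤ (1 + 0.3 * δ) / (1 - 0.3 * δ) := div_nonneg (by linarith) (by linarith)
        exact mul_le_mul (div_le_div_of_nonneg_right hexp (by positivity)) (by linarith)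
          (by positivity) (by positivity)
    _ ≤ Δ / (c * (1 + 0.48 * δ)) * (1 - 0.44 * δ) := by
        rw [div_mul_eq_mul_div, div_mul_eq_mul_div, div_le_div_iff₀ (by positivity) (by positivity)]
        have : (1 + 0.36 * δ) * (3 + 2.6 * δ) * (1 + 0.48 * δ) ≤ 2 * Δ * (1 - 0.44 * δ) := by
          nlinarith [mul_pos hδ0 hδ0]
        nlinarith [mul_le_mul_of_nonneg_left this (mul_pos hc0 hc0).le]
    _ ≤ q * (1 - 0.44 * δ) := by gcongr; linarith
    _ ≤ q - q ^ 2 * (B + 0.3 * δ) / 2 := by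
        nlinarith [mul_le_mul_of_nonneg_left hqB (by positivity : (0 : ℝ) ≤ q)]

theorem scale_below_threshold_numeric {δ L c c' x : ℝ} (hδ0 : 0 < δ) (hδ1 : δ ≤ 1 / 2)
    (hL : 0.6931 ≤ L) (hxc : x ^ 2 ≤ 2 * c * (1 + L))
    (hc : c < 12 * (1 + L) / δ ^ 3) (hc' : 2 * c' ≤ (x + 1) ^ 2) :
    c' ≤ 81 * L ^ 2 / δ ^ 3 := by
  rw [lt_div_iff₀ (by positivity)] at hc
  have h1 : c' ≤ 1.1 * (c * (1 + L)) + 5.5 := by nlinarith [sq_nonneg (x - 10)]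
  have h2 : c * (1 + L) * δ ^ 3 ≤ 12 * (1 + L) ^ 2 := by nlinarith
  have h3 : 13.2 * (1 + L) ^ 2 + 5.5 * δ ^ 3 ≤ 81 * L ^ 2 := by
    have hδ3 : δ ^ 3 ≤ 1 / 8 := by nlinarith [pow_pos hδ0 2]
    nlinarith [mul_nonneg (sub_nonneg.2 hL) (by linarith : (0 : ℝ) ≤ L)]
  rw [le_div_iff₀ (by positivity)]
  nlinarith [pow_pos hδ0 3]

namespace NormalHedge

variable {N : ℕ} (H : NormalHedge N)

def learnerLoss (t : ℕ) : ℝ := ∑ j, H.p j t * H.loss j t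

noncomputable def weight (i : Fin N) (t : ℕ) : ℝ :=
  max (H.R i t) 0 / H.c t * exp (max (H.R i t) 0 ^ 2 / (2 * H.c t))

theorem natCast_pos (H : NormalHedge N) : (0 : ℝ) < N := Nat.cast_pos.2 (by linarith [H.hN])

theorem log_natCast_ge (H : NormalHedge N) : 0.6931 ≤ log N := by
  have h := log_le_log two_pos (by exact_mod_cast H.hN : (2 : ℝ) ≤ N)
  linarith [log_two_gt_d9]

theorem sum_exp_eq {t : ℕ} (ht : 1 ≤ t) :
    ∑ i, exp (max (H.R i t) 0 ^ 2 / (2 * H.c t)) = N * exp 1 := by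
  have h := H.c_eq t ht
  rwa [one_div, inv_mul_eq_iff_eq_mul₀ H.natCast_pos.ne'] at h

theorem exists_regret_pos {t : ℕ} (ht : 1 ≤ t) : ∃ j, 0 < H.R j t := by
  by_contra! hR
  have hsum : ∑ i, exp (max (H.R i t) 0 ^ 2 / (2 * H.c t)) = N := by simp [max_eq_right (hR _)]
  nlinarith [H.sum_exp_eq ht, H.natCast_pos, add_one_lt_exp one_ne_zero]

theorem max_regret_sq_le {t : ℕ} (ht : 1 ≤ t) (i : Fin N) :
    max (H.R i t) 0 ^ 2 ≤ 2 * H.c t * (1 + log N) := by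
  have hle : exp (max (H.R i t) 0 ^ 2 / (2 * H.c t)) ≤ exp (log N + 1) := by
    rw [exp_add, exp_log H.natCast_pos, ← H.sum_exp_eq ht]
    exact Finset.single_le_sum (f := fun k ↦ exp (max (H.R k t) 0 ^ 2 / (2 * H.c t)))
      (fun _ _ ↦ (exp_pos _).le) (Finset.mem_univ i)
  rw [exp_le_exp, div_le_iff₀ (by linarith [H.c_pos t ht])] at hle
  linarith

theorem exists_le_max_regret_sq {t : ℕ} (ht : 1 ≤ t) : ∃ i, 2 * H.c t ≤ max (H.R i t) 0 ^ 2 := by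
  by_contra! h
  have hc := H.c_pos t ht
  have : Nonempty (Fin N) := ⟨⟨0, by linarith [H.hN]⟩⟩
  have hlt : ∑ i, exp (max (H.R i t) 0 ^ 2 / (2 * H.c t)) < ∑ _i : Fin N, exp 1 :=
    Finset.sum_lt_sum_of_nonempty univ_nonempty fun i _ ↦
      exp_lt_exp.2 ((div_lt_one (by linarith)).2 (h i))
  simp [H.sum_exp_eq ht] at hlt

theorem weight_nonneg {t : ℕ} (ht : 1 ≤ t) (i : Fin N) : 0 ≤ H.weight i t :=
  have := H.c_pos t ht
  mul_nonneg (div_nonneg (le_max_right _ _) this.le) (exp_pos _).le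

theorem sum_weight_pos {t : ℕ} (ht : 1 ≤ t) : 0 < ∑ j, H.weight j t := by
  obtain ⟨j, hj⟩ := H.exists_regret_pos ht
  refine Finset.sum_pos' (fun i _ ↦ H.weight_nonneg ht i) ⟨j, mem_univ j, ?_⟩
  have := H.c_pos t ht
  exact mul_pos (div_pos (lt_max_of_lt_left hj) this) (exp_pos _)

theorem p_succ {t : ℕ} (ht : 1 ≤ t) (i : Fin N) :
    H.p i (t + 1) = H.weight i t / ∑ j, H.weight j t :=
  H.p_rec i t ht

theorem p_nonneg {t : ℕ} (ht : 1 ≤ t) (i : Fin N) : 0 ≤ H.p i t := by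
  induction t, ht using Nat.le_induction with
  | base => rw [H.p_one]; exact (one_div_pos.2 H.natCast_pos).le
  | succ s hs _ =>
    rw [H.p_succ hs]
    exact div_nonneg (H.weight_nonneg hs i) (H.sum_weight_pos hs).le

theorem sum_p {t : ℕ} (ht : 1 ≤ t) : ∑ i, H.p i t = 1 := by
  induction t, ht using Nat.le_induction with
  | base => simp [H.p_one, H.natCast_pos.ne']
  | succ s hs _ => simp only [H.p_succ hs, ← Finset.sum_div, div_self (H.sum_weight_pos hs).ne']

theorem learnerLoss_mem {t : ℕ} (ht : 1 ≤ t) : H.learnerLoss t ∈ Set.Icc 0 1 := by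
  have hloss (i : Fin N) := H.loss_mem i t ht
  constructor
  · exact Finset.sum_nonneg fun i _ ↦ mul_nonneg (H.p_nonneg ht i) (hloss i).1
  · calc H.learnerLoss t ≤ ∑ i, H.p i t := Finset.sum_le_sum fun i _ ↦
          mul_le_of_le_one_right (H.p_nonneg ht i) (hloss i).2
      _ = 1 := H.sum_p ht

theorem abs_learnerLoss_sub_loss_le (t : ℕ) (i : Fin N) :
    |H.learnerLoss (t + 1) - H.loss i (t + 1)| ≤ 1 := by
  have hA := H.learnerLoss_mem (Nat.le_add_left 1 t)
  have hl := H.loss_mem i (t + 1) (Nat.le_add_left 1 t)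
  rw [abs_le]; constructor <;> linarith [hA.1, hA.2, hl.1, hl.2]

theorem R_succ (i : Fin N) (t : ℕ) :
    H.R i (t + 1) = H.R i t + (H.learnerLoss (t + 1) - H.loss i (t + 1)) :=
  H.R_rec i t

theorem sum_weight_mul_learnerLoss_sub_loss {t : ℕ} (ht : 1 ≤ t) :
    ∑ i, H.weight i t * (H.learnerLoss (t + 1) - H.loss i (t + 1)) = 0 := by
  simp only [learnerLoss, H.p_succ ht]
  exact sum_mul_sub_eq_zero_of_weighted_mean (H.sum_weight_pos ht).ne'

theorem abs_max_regret_succ_sub_le (t : ℕ) (i : Fin N) :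
    |max (H.R i (t + 1)) 0 - max (H.R i t) 0| ≤ 1 := by
  refine (abs_max_sub_max_le_abs _ _ _).trans ?_
  rw [H.R_succ, add_sub_cancel_left]
  exact H.abs_learnerLoss_sub_loss_le t i

theorem abs_sq_max_regret_succ_sub_le (t : ℕ) (i : Fin N) :
    |max (H.R i (t + 1)) 0 ^ 2 - max (H.R i t) 0 ^ 2| ≤ 2 * max (H.R i t) 0 + 1 :=
  abs_sq_sub_sq_le (le_max_right _ _) (le_max_right _ _) (H.abs_max_regret_succ_sub_le t i)

theorem sum_exp_succ_le {t : ℕ} (ht : 1 ≤ t) {ε : ℝ}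
    (hε : ∀ i, (2 * max (H.R i t) 0 + 1) / (2 * H.c t) ≤ ε) :
    ∑ i, exp (max (H.R i (t + 1)) 0 ^ 2 / (2 * H.c t)) ≤
      ∑ i, exp (max (H.R i t) 0 ^ 2 / (2 * H.c t)) + exp ε / (2 * H.c t) *
        ((1 + 2 * ε) * ∑ i, exp (max (H.R i t) 0 ^ 2 / (2 * H.c t)) +
          2 * ∑ i, max (H.R i t) 0 ^ 2 / (2 * H.c t) *
            exp (max (H.R i t) 0 ^ 2 / (2 * H.c t))) := by
  refine sum_exp_sq_div_le (H.c_pos t ht) (fun i ↦ le_max_right _ _) (fun i ↦ ?_)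
    (H.abs_sq_max_regret_succ_sub_le t) hε (H.sum_weight_mul_learnerLoss_sub_loss ht)
  rw [H.R_succ]
  exact sq_max_add_le_of_abs_le_one _ (H.abs_learnerLoss_sub_loss_le t i)

theorem c_le_of_sum_exp_le {t : ℕ} (ht : 1 ≤ t) {d : ℝ} (hd : 0 < d)
    (h : ∑ i, exp (max (H.R i t) 0 ^ 2 / (2 * d)) ≤ N * exp 1) : H.c t ≤ d := by
  by_contra! hdc
  obtain ⟨j, hj⟩ := H.exists_regret_pos ht
  have hlt : ∑ i, exp (max (H.R i t) 0 ^ 2 / (2 * H.c t)) <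
      ∑ i, exp (max (H.R i t) 0 ^ 2 / (2 * d)) := by
    refine Finset.sum_lt_sum (fun i _ ↦ exp_le_exp.2 ?_) ⟨j, mem_univ j, exp_lt_exp.2 ?_⟩
    · exact div_le_div_of_nonneg_left (sq_nonneg _) (by positivity) (by linarith)
    · exact div_lt_div_of_pos_left (pow_pos (lt_max_of_lt_left hj) 2) (by positivity)
        (by linarith)
  linarith [H.sum_exp_eq ht]

theorem c_one_le : H.c 1 ≤ 1 / 2 := by
  obtain ⟨i, hi⟩ := H.exists_le_max_regret_sq le_rfl
  have hR : H.R i 1 ≤ 1 := by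
    have := (abs_le.1 (H.abs_learnerLoss_sub_loss_le 0 i)).2
    rw [H.R_succ, H.R_zero]
    linarith
  nlinarith [max_le hR zero_le_one, le_max_right (H.R i 1) 0]

theorem c_succ_le_add {t : ℕ} (ht : 1 ≤ t) {δ : ℝ} (hδ0 : 0 < δ) (hδ1 : δ ≤ 1 / 2)
    (hc : 12 * (1 + log N) / δ ^ 3 ≤ H.c t) :
    H.c (t + 1) ≤ H.c t + 3 / 2 * (1 + 49.19 * δ) := by
  set c := H.c t
  set Δ := 3 / 2 * (1 + 49.19 * δ)
  set a := fun i ↦ max (H.R i t) 0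
  set b := fun i ↦ max (H.R i (t + 1)) 0
  have hc0 : 0 < c := H.c_pos t ht
  have hB : 1.69 ≤ 1 + log N := by linarith [H.log_natCast_ge]
  have hε (i : Fin N) : (2 * a i + 1) / (2 * c) ≤ 0.3 * δ :=
    two_mul_add_one_div_le_of_sq_le hδ0 hδ1 hB hc (le_max_right _ _) (H.max_regret_sq_le ht i)
  have hdiff (i : Fin N) : |b i ^ 2 / (2 * c) - a i ^ 2 / (2 * c)| ≤ 0.3 * δ := by
    rw [← sub_div, abs_div, abs_of_pos (by positivity : 0 < 2 * c)]
    exact (div_le_div_of_nonneg_right (H.abs_sq_max_regret_succ_sub_le t i) (by positivity)).trans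
      (hε i)
  have hu_le (i : Fin N) : a i ^ 2 / (2 * c) ≤ 1 + log N := by
    rw [div_le_iff₀ (by positivity)]
    linarith [H.max_regret_sq_le ht i]
  refine H.c_le_of_sum_exp_le (Nat.le_add_left 1 t) (by positivity) ?_
  have key := sum_exp_one_sub_mul_le_card_mul_exp_one (q := Δ / (c + Δ)) (M := 1 + log N + 0.3 * δ)
    (u := fun i ↦ a i ^ 2 / (2 * c)) (u' := fun i ↦ b i ^ 2 / (2 * c))
    (fun i ↦ by positivity) (fun i ↦ by positivity)
    (fun i ↦ by linarith [(abs_le.1 (hdiff i)).1])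
    (fun i ↦ by linarith [(abs_le.1 (hdiff i)).2, hu_le i])
    (by positivity) (by linarith) (by positivity) (by positivity)
    (by simpa using H.sum_exp_eq ht) (H.sum_exp_succ_le ht hε) (scale_growth_numeric hδ0 hδ1 hB hc)
  rw [Fintype.card_fin] at key
  convert key using 3 with i
  simp only [b]
  rw [one_sub_div (by positivity), add_sub_cancel_right]
  field_simp

theorem c_succ_le_of_lt {t : ℕ} (ht : 1 ≤ t) {δ : ℝ} (hδ0 : 0 < δ) (hδ1 : δ ≤ 1 / 2)
    (hc : H.c t < 12 * (1 + log N) / δ ^ 3) :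
    H.c (t + 1) ≤ 81 * log N ^ 2 / δ ^ 3 := by
  obtain ⟨j, hj⟩ := H.exists_le_max_regret_sq (Nat.le_add_left 1 t)
  have hstep : max (H.R j (t + 1)) 0 ≤ max (H.R j t) 0 + 1 := by
    linarith [(abs_le.1 (H.abs_max_regret_succ_sub_le t j)).2]
  exact scale_below_threshold_numeric hδ0 hδ1 H.log_natCast_ge (H.max_regret_sq_le ht j) hc
    (hj.trans (pow_le_pow_left₀ (le_max_right _ _) hstep 2))

end NormalHedge

/-- Cumulative bound on the scale parameter: for every `0 < δ ≤ 1/2` and every round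
`t ≥ 1`, `c t ≤ (3/2)(1 + 49.19 δ) t + (8 ln³ N)/δ + (81 ln² N)/δ³`. -/
theorem normalHedge_scale_cumulative_bound {N : ℕ} (H : NormalHedge N)
    (δ : ℝ) (hδ0 : 0 < δ) (hδ1 : δ ≤ 1 / 2)
    (t : ℕ) (ht : 1 ≤ t) :
    H.c t ≤ 3 / 2 * (1 + 49.19 * δ) * t +
      8 * Real.log N ^ 3 / δ + 81 * Real.log N ^ 2 / δ ^ 3 := by
  have hcubic : 0 ≤ 8 * log N ^ 3 / δ := by positivity
  have hsq : 0 ≤ 81 * log N ^ 2 / δ ^ 3 := by positivity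
  induction t, ht using Nat.le_induction with
  | base => linarith [H.c_one_le]
  | succ t ht ih =>
    push_cast
    rcases le_or_gt (12 * (1 + log N) / δ ^ 3) (H.c t) with hc | hc
    · linarith [H.c_succ_le_add ht hδ0 hδ1 hc]
    · have : 0 ≤ 3 / 2 * (1 + 49.19 * δ) * (t + 1) := by positivity
      linarith [H.c_succ_le_of_lt ht hδ0 hδ1 hc]
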